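/- arXiv:1211.2353 — 6 statements merged into one kernel-verified Lean document; each statement's English description precedes it below -/
import Mathlib

section
/- Let m ≥ 1 be an integer, L > 0, and let f : ℝ² → ℝ be a C^m function that is L-periodic in its first argument, compactly supported in its second argument, and satisfies ∫₀^L ∫_ℝ f(x,v) dv dx = L. Then the function x ↦ E(f,x), defined on [0,L] by the kernel formula, extends to an L-periodic C^m function on ℝ. -/
open MeasureTheory Real Set
open scoped Convolution

/-- The electric field determined by the density `f` via the kernel
`K(x,y) = y/L` for `y < x` and `K(x,y) = y/L - 1` for `y > x`. -/
noncomputable def Efield (L : ℝ) (f : ℝ → ℝ → ℝ) (x : ℝ) : ℝ :=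
  ∫ y in (0:ℝ)..L, (if y < x then y / L else y / L - 1) * ((∫ v : ℝ, f y v) - 1)

/-- If `f` is a `C^m` function (`m ≥ 1`), `L`-periodic in its first
argument, compactly supported in its second argument, and satisfies the neutrality
condition `∫₀^L ∫_ℝ f dv dx = L`, then `x ↦ E(f,x)`, defined on `[0,L]` by the kernel
formula, extends to an `L`-periodic `C^m` function on `ℝ`. -/
theorem legendre_efield_regularity
    (m : ℕ) (hm : 1 ≤ m) (L : ℝ) (hL : 0 < L) (f : ℝ → ℝ → ℝ)
    (hf_smooth : ContDiff ℝ m (fun p : ℝ × ℝ => f p.1 p.2))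
    (hf_per : ∀ x v, f (x + L) v = f x v)
    (hf_supp : ∃ R : ℝ, ∀ x v, R ≤ |v| → f x v = 0)
    (hf_neutral : (∫ x in (0:ℝ)..L, (∫ v : ℝ, f x v)) = L) :
    ∃ Eext : ℝ → ℝ,
      ContDiff ℝ m Eext ∧
      (∀ x, Eext (x + L) = Eext x) ∧
      (∀ x ∈ Set.Icc (0:ℝ) L, Eext x = Efield L f x) := by
  obtain ⟨R, hR⟩ := hf_supp
  -- The density ρ(y) = ∫ f(y,v) dv - 1 is C^m.
  set ρ : ℝ → ℝ := fun y => (∫ v : ℝ, f y v) - 1 with hρ_def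
  have hconv : ContDiffOn ℝ (m : ℕ∞)
      (fun q : ℝ × ℝ => (((fun _ : ℝ => (1:ℝ)) ⋆[ContinuousLinearMap.mul ℝ ℝ, volume] f q.1) q.2))
      (univ ×ˢ univ) := by
    apply contDiffOn_convolution_right_with_param (ContinuousLinearMap.mul ℝ ℝ) isOpen_univ
      (isCompact_closedBall (0:ℝ) |R|)
    · intro p x _ hx
      apply hR
      simp only [Metric.mem_closedBall, dist_zero_right, Real.norm_eq_abs, not_le] at hx
      exact (le_abs_self R).trans hx.le
    · exact (locallyIntegrable_const 1)
    · exact hf_smooth.contDiffOn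
  have hρint : ContDiff ℝ m (fun y : ℝ => ∫ v : ℝ, f y v) := by
    have h1 : ContDiff ℝ m (fun x : ℝ =>
        (((fun _ : ℝ => (1:ℝ)) ⋆[ContinuousLinearMap.mul ℝ ℝ, volume] f x) 0)) := by
      rw [← contDiffOn_univ]
      exact hconv.comp (contDiff_id.prodMk contDiff_const).contDiffOn
        (fun x _ => by simp [Set.mem_prod])
    have h2 : ∀ x : ℝ,
        (((fun _ : ℝ => (1:ℝ)) ⋆[ContinuousLinearMap.mul ℝ ℝ, volume] f x) 0)
          = ∫ v : ℝ, f x v := by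
      intro x
      simp only [convolution, ContinuousLinearMap.mul_apply', one_mul, zero_sub]
      exact integral_neg_eq_self _ _
    simpa only [funext h2] using h1
  have hρ : ContDiff ℝ m ρ := hρint.sub contDiff_const
  have hρc : Continuous ρ := hρ.continuous
  -- ρ has zero mean over one period
  have hρmean : (∫ y in (0:ℝ)..L, ρ y) = 0 := by
    rw [hρ_def]
    rw [intervalIntegral.integral_sub (hρint.continuous.intervalIntegrable 0 L)
      (intervalIntegrable_const)]
    simp [hf_neutral]
  have hρper : Function.Periodic ρ L := fun x => by simp [hρ_def, hf_per]
  -- the constant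
  set c : ℝ := ∫ y in (0:ℝ)..L, (y / L) * ρ y with hc_def
  refine ⟨fun x => c + ∫ y in (0:ℝ)..x, ρ y, ?_, ?_, ?_⟩
  · -- smoothness
    have hdiff : ∀ x : ℝ, HasDerivAt (fun x => c + ∫ y in (0:ℝ)..x, ρ y) (ρ x) x :=
      fun x => ((hρc.integral_hasStrictDerivAt 0 x).hasDerivAt).const_add c
    have : ContDiff ℝ ((m : WithTop ℕ∞) + 1) (fun x => c + ∫ y in (0:ℝ)..x, ρ y) := by
      rw [contDiff_succ_iff_deriv]
      refine ⟨fun x => (hdiff x).differentiableAt, ?_, ?_⟩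
      · intro h; exact absurd h (by exact_mod_cast (by simp : (m : WithTop ℕ∞) ≠ ⊤))
      · have : deriv (fun x => c + ∫ y in (0:ℝ)..x, ρ y) = ρ :=
          funext fun x => (hdiff x).deriv
        rw [this]; exact hρ
    exact this.of_le le_self_add
  · -- periodicity
    intro x
    have h1 : (∫ y in (0:ℝ)..(x + L), ρ y)
        = (∫ y in (0:ℝ)..x, ρ y) + ∫ y in x..(x + L), ρ y := by
      rw [intervalIntegral.integral_add_adjacent_intervals
        (hρc.intervalIntegrable 0 x) (hρc.intervalIntegrable x (x + L))]
    have h2 : (∫ y in x..(x + L), ρ y) = ∫ y in (0:ℝ)..(0 + L), ρ y :=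
      hρper.intervalIntegral_add_eq x 0
    show c + (∫ y in (0:ℝ)..(x + L), ρ y) = c + ∫ y in (0:ℝ)..x, ρ y
    rw [h1, h2, zero_add, hρmean]
    ring
  · -- agreement with Efield on [0, L]
    rintro x ⟨hx0, hxL⟩
    have hInt1 : ∀ a b : ℝ, IntervalIntegrable (fun y => (y / L) * ρ y) volume a b :=
      fun a b => ((continuous_id.div_const L).mul hρc).intervalIntegrable a b
    have hIndInt : ∀ a b : ℝ,
        IntervalIntegrable (Set.indicator (Set.Ici x) ρ) volume a b := by
      intro a b
      rw [intervalIntegrable_iff] at *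
      exact ((hρc.intervalIntegrable a b).def').indicator measurableSet_Ici
    have hKeq : ∀ y : ℝ, (if y < x then y / L else y / L - 1) * ρ y
        = (y / L) * ρ y - Set.indicator (Set.Ici x) ρ y := by
      intro y
      by_cases h : y < x
      · simp [h, Set.indicator_of_notMem (by simpa using h : y ∉ Set.Ici x)]
      · simp only [h, if_false]
        rw [Set.indicator_of_mem (by simpa using not_lt.mp h : y ∈ Set.Ici x)]
        ring
    have hKint : ∀ a b : ℝ, IntervalIntegrable
        (fun y => (if y < x then y / L else y / L - 1) * ρ y) volume a b := by
      intro a b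
      have := (hInt1 a b).sub (hIndInt a b)
      simpa only [← hKeq] using this
    have hsplit : Efield L f x
        = (∫ y in (0:ℝ)..L, (y / L) * ρ y) - ∫ y in (0:ℝ)..L, Set.indicator (Set.Ici x) ρ y := by
      rw [Efield]
      rw [show (fun y => (if y < x then y / L else y / L - 1) * ((∫ v : ℝ, f y v) - 1))
          = fun y => (y / L) * ρ y - Set.indicator (Set.Ici x) ρ y from funext hKeq]
      exact intervalIntegral.integral_sub (hInt1 0 L) (hIndInt 0 L)
    -- compute the indicator integral: it is ∫_x^L ρ
    have hind : (∫ y in (0:ℝ)..L, Set.indicator (Set.Ici x) ρ y)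
        = ∫ y in x..L, ρ y := by
      have hadd : (∫ y in (0:ℝ)..L, Set.indicator (Set.Ici x) ρ y)
          = (∫ y in (0:ℝ)..x, Set.indicator (Set.Ici x) ρ y)
            + ∫ y in x..L, Set.indicator (Set.Ici x) ρ y := by
        rw [intervalIntegral.integral_add_adjacent_intervals (hIndInt 0 x) (hIndInt x L)]
      have hz : (∫ y in (0:ℝ)..x, Set.indicator (Set.Ici x) ρ y) = 0 := by
        have heq : (∫ y in (0:ℝ)..x, Set.indicator (Set.Ici x) ρ y)
            = ∫ _y in (0:ℝ)..x, (0:ℝ) := by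
          apply intervalIntegral.integral_congr_ae
          filter_upwards [(show ∀ᵐ y : ℝ, y ≠ x by
            refine ae_iff.2 ?_; simpa using measure_singleton x)] with y hne hmem
          rw [Set.uIoc_of_le hx0] at hmem
          exact Set.indicator_of_notMem (by simpa using lt_of_le_of_ne hmem.2 hne) ρ
        simp [heq]
      have he : (∫ y in x..L, Set.indicator (Set.Ici x) ρ y) = ∫ y in x..L, ρ y := by
        apply intervalIntegral.integral_congr_ae
        filter_upwards with y hmem
        rw [Set.uIoc_of_le hxL] at hmem
        exact Set.indicator_of_mem (le_of_lt hmem.1) ρ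
      rw [hadd, hz, he, zero_add]
    have hxl : (∫ y in x..L, ρ y) = - ∫ y in (0:ℝ)..x, ρ y := by
      have := intervalIntegral.integral_add_adjacent_intervals (μ := volume)
        (hρc.intervalIntegrable 0 x) (hρc.intervalIntegrable x L)
      rw [hρmean] at this
      linarith
    rw [hsplit, hind, hxl, hc_def]
    ring
end

section
/- Let f : [0,L]×ℝ → ℝ be continuous and compactly supported in its second argument. Then for every x ∈ (0,L), x ↦ E(f,x) is differentiable at x with ∂_x E(f,x) = ∫_ℝ f(x,v) dv − 1; moreover, if ∫₀^L ∫_ℝ f(y,v) dv dy = L, then E(f,0) = E(f,L). -/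
open MeasureTheory Real Set

theorem continuousOn_integral_of_forall_abs_ge_eq_zero {X : Type*} [TopologicalSpace X]
    {s : Set X} {f : X → ℝ → ℝ} {R : ℝ} (hf : ContinuousOn (fun p : X × ℝ => f p.1 p.2) (s ×ˢ univ))
    (hR : ∀ x v, R ≤ |v| → f x v = 0) :
    ContinuousOn (fun x => ∫ v, f x v) s :=
  continuousOn_integral_of_compact_support (isCompact_closedBall 0 R) hf fun x v _ hv =>
    hR x v (by simpa using (lt_of_not_ge (by simpa using hv)).le)

theorem intervalIntegral.integral_indicator_Iio {μ : Measure ℝ} [NullSingletonClass μ]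
    {f : ℝ → ℝ} {a b c : ℝ} (hb : b ∈ Icc a c) :
    ∫ x in a..c, indicator (Iio b) f x ∂μ = ∫ x in a..b, f x ∂μ := by
  have hinter : Iio b ∩ Ioc a c = Ioo a b := by
    ext x
    simp only [mem_inter_iff, mem_Iio, mem_Ioc, mem_Ioo]
    exact ⟨fun h => ⟨h.2.1, h.1⟩, fun h => ⟨h.2, h.1, h.2.le.trans hb.2⟩⟩
  rw [intervalIntegral.integral_of_le hb.1, intervalIntegral.integral_of_le (hb.1.trans hb.2),
    MeasureTheory.integral_indicator measurableSet_Iio,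
    Measure.restrict_restrict measurableSet_Iio, hinter, integral_Ioc_eq_integral_Ioo]

theorem integral_efieldKernel_mul {L x : ℝ} {g : ℝ → ℝ} (hx : x ∈ Icc 0 L)
    (hg : IntervalIntegrable g volume 0 L) :
    ∫ y in (0:ℝ)..L, (if y < x then y / L else y / L - 1) * g y
      = (∫ y in (0:ℝ)..L, (y / L - 1) * g y) + ∫ y in (0:ℝ)..x, g y := by
  have hsplit : ∀ y, (if y < x then y / L else y / L - 1) * g y
      = (y / L - 1) * g y + indicator (Iio x) g y := by
    intro y
    simp only [indicator, mem_Iio]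
    split_ifs <;> ring
  have hkernel : IntervalIntegrable (fun y => (y / L - 1) * g y) volume 0 L :=
    hg.continuousOn_mul (by fun_prop)
  have hindicator : IntervalIntegrable (indicator (Iio x) g) volume 0 L :=
    ⟨hg.1.indicator measurableSet_Iio, hg.2.indicator measurableSet_Iio⟩
  simp_rw [hsplit]
  rw [intervalIntegral.integral_add hkernel hindicator,
    intervalIntegral.integral_indicator_Iio hx]

/-- For `f` continuous on `[0,L] × ℝ` and compactly supported in its
second argument, `x ↦ E(f,x)` is differentiable at every `x ∈ (0,L)` with derivative
`∫_ℝ f(x,v) dv - 1`; moreover, if `∫₀^L ∫_ℝ f(y,v) dv dy = L`, then `E(f,0) = E(f,L)`. -/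
theorem efield_hasDerivAt_and_periodic
    (L : ℝ) (hL : 0 < L) (f : ℝ → ℝ → ℝ)
    (hf_cont : ContinuousOn (fun p : ℝ × ℝ => f p.1 p.2)
      (Set.Icc 0 L ×ˢ (Set.univ : Set ℝ)))
    (hf_supp : ∃ R : ℝ, ∀ x v, R ≤ |v| → f x v = 0) :
    (∀ x ∈ Set.Ioo (0:ℝ) L,
      HasDerivAt (Efield L f) ((∫ v : ℝ, f x v) - 1) x) ∧
    ((∫ y in (0:ℝ)..L, (∫ v : ℝ, f y v)) = L → Efield L f 0 = Efield L f L) := by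
  obtain ⟨R, hR⟩ := hf_supp
  have hρ := continuousOn_integral_of_forall_abs_ge_eq_zero hf_cont hR
  set g : ℝ → ℝ := fun y => (∫ v : ℝ, f y v) - 1
  have hg : ContinuousOn g (Icc 0 L) := hρ.sub continuousOn_const
  have hg_int : ∀ x ∈ Icc 0 L, IntervalIntegrable g volume 0 x := fun x hx =>
    (hg.mono (Icc_subset_Icc_right hx.2)).intervalIntegrable_of_Icc hx.1
  have hform : ∀ x ∈ Icc 0 L,
      Efield L f x = (∫ y in (0:ℝ)..L, (y / L - 1) * g y) + ∫ y in (0:ℝ)..x, g y :=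
    fun x hx => integral_efieldKernel_mul hx (hg_int L (right_mem_Icc.2 hL.le))
  constructor
  · intro x hx
    have hFTC : HasDerivAt (fun u => ∫ y in (0:ℝ)..u, g y) (g x) x :=
      intervalIntegral.integral_hasDerivAt_right (hg_int x (Ioo_subset_Icc_self hx))
        ((hg.mono Ioo_subset_Icc_self).stronglyMeasurableAtFilter isOpen_Ioo x hx)
        (hg.continuousAt (Icc_mem_nhds hx.1 hx.2))
    refine (hFTC.const_add (∫ y in (0:ℝ)..L, (y / L - 1) * g y)).congr_of_eventuallyEq ?_
    filter_upwards [Ioo_mem_nhds hx.1 hx.2] with u hu using hform u (Ioo_subset_Icc_self hu)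
  · intro hmass
    have hg_zero : ∫ y in (0:ℝ)..L, g y = 0 := by
      rw [intervalIntegral.integral_sub (hρ.intervalIntegrable_of_Icc hL.le)
        intervalIntegrable_const, hmass, intervalIntegral.integral_const, smul_eq_mul, mul_one,
        sub_zero, sub_self]
    rw [hform 0 (left_mem_Icc.2 hL.le), hform L (right_mem_Icc.2 hL.le),
      intervalIntegral.integral_same, hg_zero]
end

section
/- Let f : [0,L]×ℝ → ℝ be continuous and compactly supported in its second argument. Then the electric field defined by the kernel formula has zero integral mean: ∫₀^L E(f,x) dx = 0. -/
open MeasureTheory Real Set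

noncomputable def efieldKernel (L x y : ℝ) : ℝ :=
  if y < x then y / L else y / L - 1

lemma measurable_efieldKernel (L : ℝ) :
    Measurable fun p : ℝ × ℝ => efieldKernel L p.1 p.2 :=
  Measurable.ite (measurableSet_lt measurable_snd measurable_fst)
    (measurable_snd.div_const L) ((measurable_snd.div_const L).sub measurable_const)

lemma monotone_efieldKernel (L y : ℝ) : Monotone fun x => efieldKernel L x y := by
  intro a b hab
  simp only [efieldKernel]
  split_ifs <;> linarith

lemma abs_efieldKernel_le_one {L y : ℝ} (hy : y ∈ Icc 0 L) (x : ℝ) :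
    |efieldKernel L x y| ≤ 1 := by
  have h₀ : 0 ≤ y / L := div_nonneg hy.1 (hy.1.trans hy.2)
  have h₁ : y / L ≤ 1 := div_le_one_of_le₀ hy.2 (hy.1.trans hy.2)
  rw [abs_le, efieldKernel]
  split_ifs <;> constructor <;> linarith

lemma integral_efieldKernel_eq_zero {L y : ℝ} (hy : y ∈ Icc 0 L) :
    ∫ x in (0:ℝ)..L, efieldKernel L x y = 0 := by
  have hleft : ∫ x in (0:ℝ)..y, efieldKernel L x y = y * (y / L - 1) := by
    rw [intervalIntegral.integral_congr_ae (g := fun _ => y / L - 1),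
      intervalIntegral.integral_const, sub_zero, smul_eq_mul]
    refine Filter.Eventually.of_forall fun x hx => ?_
    rw [uIoc_of_le hy.1] at hx
    exact if_neg hx.2.not_gt
  have hright : ∫ x in y..L, efieldKernel L x y = (L - y) * (y / L) := by
    rw [intervalIntegral.integral_congr_ae (g := fun _ => y / L),
      intervalIntegral.integral_const, smul_eq_mul]
    refine Filter.Eventually.of_forall fun x hx => ?_
    rw [uIoc_of_le hy.2] at hx
    exact if_pos hx.1
  have hint (a b : ℝ) : IntervalIntegrable (fun x => efieldKernel L x y) volume a b :=
    (monotone_efieldKernel L y).intervalIntegrable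
  rw [← intervalIntegral.integral_add_adjacent_intervals (hint 0 y) (hint y L), hleft, hright]
  rcases hy.1.eq_or_lt with rfl | hy₀
  · ring
  · field_simp [(hy₀.trans_le hy.2).ne']
    ring

lemma integral_integral_efieldKernel_mul_eq_zero {L : ℝ} (hL : 0 ≤ L) {g : ℝ → ℝ}
    (hg : IntegrableOn g (Ioc 0 L)) :
    ∫ x in (0:ℝ)..L, ∫ y in (0:ℝ)..L, efieldKernel L x y * g y = 0 := by
  set μ : Measure ℝ := volume.restrict (Ioc 0 L)
  have hK_bound : ∀ᵐ p ∂μ.prod μ, ‖efieldKernel L p.1 p.2‖ ≤ 1 := by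
    filter_upwards [Measure.quasiMeasurePreserving_snd.ae (ae_restrict_mem measurableSet_Ioc)]
      with p hp
    exact abs_efieldKernel_le_one (Ioc_subset_Icc_self hp) p.1
  have hint : Integrable (Function.uncurry fun x y => efieldKernel L x y * g y) (μ.prod μ) :=
    (hg.comp_snd μ).bdd_mul (measurable_efieldKernel L).aestronglyMeasurable hK_bound
  simp only [intervalIntegral.integral_of_le hL]
  rw [integral_integral_swap hint]
  refine (setIntegral_congr_fun measurableSet_Ioc fun y hy => ?_).trans (integral_zero _ _)
  rw [integral_mul_const, ← intervalIntegral.integral_of_le hL,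
    integral_efieldKernel_eq_zero (Ioc_subset_Icc_self hy), zero_mul]

/-- For `f` continuous on `[0,L] × ℝ` and compactly supported in its
second argument, the electric field defined by the kernel formula has zero integral
mean: `∫₀^L E(f,x) dx = 0`. -/
theorem efield_zero_mean
    (L : ℝ) (hL : 0 < L) (f : ℝ → ℝ → ℝ)
    (hf_cont : ContinuousOn (fun p : ℝ × ℝ => f p.1 p.2)
      (Set.Icc 0 L ×ˢ (Set.univ : Set ℝ)))
    (hf_supp : ∃ R : ℝ, ∀ x v, R ≤ |v| → f x v = 0) :
    (∫ x in (0:ℝ)..L, Efield L f x) = 0 := by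
  obtain ⟨R, hR⟩ := hf_supp
  have hdensity : ContinuousOn (fun y => ∫ v, f y v) (Icc 0 L) :=
    continuousOn_integral_of_compact_support (isCompact_closedBall 0 R) hf_cont
      fun y v _ hv => hR y v (not_le.mp (by simpa using hv)).le
  exact integral_integral_efieldKernel_mul_eq_zero hL.le
    ((hdensity.sub continuousOn_const).integrableOn_Icc.mono_set Ioc_subset_Icc_self)
end

section
/- (Jackson-type estimate for the Legendre projection.) For every integer ℓ ≥ 0 there exists a constant C = C(ℓ) such that for all h > 0, all g ∈ C^{ℓ+1}([0,h]), and all k ∈ {0,…,ℓ}: sup_{x∈[0,h]} |g^{(k)}(x) − (Pg)^{(k)}(x)| ≤ C h^{ℓ−k+1} sup_{x∈[0,h]} |g^{(ℓ+1)}(x)|. -/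
open MeasureTheory Real Set

/-- The degree-`k` Legendre polynomial on `[-1,1]` (Rodrigues' formula), normalized
so that `∫_{-1}^1 p_k(x)^2 dx = 2/(2k+1)`. -/
noncomputable def legendreP (k : ℕ) : ℝ → ℝ :=
  fun x => (1 / ((2:ℝ) ^ k * (Nat.factorial k : ℝ))) *
    iteratedDeriv k (fun y : ℝ => (y ^ 2 - 1) ^ k) x

/-- The `L²([0,h])`-orthogonal projection onto polynomials of degree at most `ℓ`,
written in terms of the translated and scaled Legendre polynomials. -/
noncomputable def legProj (ℓ : ℕ) (h : ℝ) (g : ℝ → ℝ) : ℝ → ℝ :=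
  fun x => ∑ k ∈ Finset.range (ℓ + 1),
    ((2 * (k : ℝ) + 1) / h) * (∫ y in (0:ℝ)..h, g y * legendreP k (2 * y / h - 1)) *
      legendreP k (2 * x / h - 1)

/-!
Write `g = T + R` with `T` the Taylor polynomial of `g` of degree `ℓ` at `0`. Taylor's theorem,
applied to every derivative of `g`, gives `|(g - T)⁽ᵐ⁾| ≤ M h^(ℓ+1-m)` on `[0, h]`.
Rodrigues' formula and repeated integration by parts show that the Legendre polynomials are
orthogonal on `[-1, 1]` with `∫ Pₖ² = 2 / (2k + 1)`; since `P₀, …, P_ℓ` span the polynomials of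
degree `≤ ℓ`, the projection reproduces `T`. Hence `g⁽ᵏ⁾ - (Pg)⁽ᵏ⁾ = (g - T)⁽ᵏ⁾ - (PR)⁽ᵏ⁾`, and
`(PR)⁽ᵏ⁾` is a combination of the `(2/h)ᵏ Pⱼ⁽ᵏ⁾(2x/h - 1)` with coefficients `O(sup |R|)`, so it is
`O(M h^(ℓ+1) h^(-k))`.
-/

open Polynomial
open scoped Nat

namespace Polynomial

theorem iteratedDeriv_eval (p : ℝ[X]) (n : ℕ) :
    iteratedDeriv n (fun x => p.eval x) = fun x => (derivative^[n] p).eval x := by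
  induction n with
  | zero => simp
  | succ n ih =>
    ext x
    rw [iteratedDeriv_succ, ih, Function.iterate_succ_apply', Polynomial.deriv]

theorem iterate_derivative_comp_C_mul_X_add_C {R : Type*} [CommSemiring R] (p : R[X]) (a b : R)
    (k : ℕ) : derivative^[k] (p.comp (C a * X + C b))
      = C (a ^ k) * (derivative^[k] p).comp (C a * X + C b) := by
  induction k with
  | zero => simp
  | succ k ih =>
    rw [Function.iterate_succ_apply', ih, derivative_C_mul, derivative_comp,
      Function.iterate_succ_apply']
    simp only [derivative_add, derivative_C_mul_X, derivative_C, add_zero, pow_succ, C_mul]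
    ring

theorem integral_eval_mul_derivative {a b : ℝ} (p q : ℝ[X]) (ha : q.eval a = 0)
    (hb : q.eval b = 0) :
    ∫ x in a..b, p.eval x * (derivative q).eval x
      = -∫ x in a..b, (derivative p).eval x * q.eval x := by
  rw [intervalIntegral.integral_mul_deriv_eq_deriv_mul (fun x _ => p.hasDerivAt x)
    (fun x _ => q.hasDerivAt x) ((derivative p).continuous.intervalIntegrable _ _)
    ((derivative q).continuous.intervalIntegrable _ _), ha, hb]
  ring

theorem exists_forall_abs_eval_le (s : Finset ℝ[X]) {K : Set ℝ} (hK : IsCompact K) :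
    ∃ B, ∀ p ∈ s, ∀ t ∈ K, |p.eval t| ≤ B := by
  obtain ⟨B, hB⟩ := hK.exists_bound_of_continuousOn
    (f := fun t => ∑ p ∈ s, |p.eval t|) (by fun_prop)
  refine ⟨B, fun p hp t ht => le_trans ?_ ((le_abs_self _).trans (hB t ht))⟩
  exact Finset.single_le_sum (f := fun p : ℝ[X] => |p.eval t|) (fun _ _ => abs_nonneg _) hp

theorem exists_natDegree_le_eval_iterate_derivative_eq (a : ℝ) (c : ℕ → ℝ) (n : ℕ) :
    ∃ p : ℝ[X], p.natDegree ≤ n ∧ ∀ m ≤ n, (derivative^[m] p).eval a = c m := by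
  refine ⟨∑ i ∈ Finset.range (n + 1), C (c i / i !) * (X - C a) ^ i, ?_, fun m hm => ?_⟩
  · refine natDegree_sum_le_of_forall_le _ _ fun i hi => ?_
    refine (natDegree_C_mul_le _ _).trans ?_
    rw [natDegree_pow, natDegree_X_sub_C, mul_one]
    exact Nat.lt_succ_iff.mp (Finset.mem_range.mp hi)
  · simp only [iterate_derivative_sum, iterate_derivative_C_mul, iterate_derivative_X_sub_pow,
      eval_finsetSum, eval_mul, eval_C, eval_smul, eval_pow, eval_sub, eval_X, sub_self]
    rw [Finset.sum_eq_single m]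
    · rw [Nat.sub_self, pow_zero, Nat.descFactorial_self, nsmul_one]
      field_simp
    · intro i _ hi
      rcases lt_or_gt_of_ne hi with hlt | hgt
      · rw [Nat.descFactorial_eq_zero_iff_lt.mpr hlt]; simp
      · rw [zero_pow (by omega)]; simp
    · intro hm'; exact absurd (Finset.mem_range.mpr (by omega)) hm'

theorem iterate_derivative_natDegree (p : ℝ[X]) :
    derivative^[p.natDegree] p = C (p.natDegree ! * p.leadingCoeff) := by
  rw [eq_C_of_natDegree_le_zero ((natDegree_iterate_derivative _ _).trans (by omega)),
    coeff_iterate_derivative, zero_add, Nat.descFactorial_self, nsmul_eq_mul, leadingCoeff]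

end Polynomial

theorem abs_iteratedDerivWithin_sub_eval_le {f : ℝ → ℝ} {a b M : ℝ} {n : ℕ} {p : ℝ[X]}
    (hab : a < b) (hf : ContDiffOn ℝ (n + 1) f (Icc a b))
    (hM : ∀ y ∈ Icc a b, |iteratedDerivWithin (n + 1) f (Icc a b) y| ≤ M)
    (hp : p.natDegree ≤ n)
    (hpa : ∀ m ≤ n, (derivative^[m] p).eval a = iteratedDerivWithin m f (Icc a b) a)
    {m : ℕ} (hm : m ≤ n + 1) {y : ℝ} (hy : y ∈ Icc a b) :
    |iteratedDerivWithin m f (Icc a b) y - (derivative^[m] p).eval y|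
      ≤ M * (b - a) ^ (n + 1 - m) := by
  -- Downward induction on `m`: the error `(f - p)⁽ᵐ⁾` vanishes at `a` and has derivative
  -- `(f - p)⁽ᵐ⁺¹⁾`, so the mean value inequality gains one factor `b - a` per step.
  obtain ⟨d, hd⟩ : ∃ d, m + d = n + 1 := ⟨n + 1 - m, by omega⟩
  rw [show n + 1 - m = d by omega]
  induction d generalizing m y with
  | zero =>
    obtain rfl : m = n + 1 := by omega
    rw [iterate_derivative_eq_zero (by omega), eval_zero, sub_zero, pow_zero, mul_one]
    exact hM y hy
  | succ d ih =>
    have hmn : m ≤ n := by omega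
    have hderiv : ∀ z ∈ Icc a b, HasDerivWithinAt
        (fun z => iteratedDerivWithin m f (Icc a b) z - (derivative^[m] p).eval z)
        (iteratedDerivWithin (m + 1) f (Icc a b) z - (derivative^[m + 1] p).eval z)
        (Icc a b) z := by
      intro z hz
      have hdiff := hf.differentiableOn_iteratedDerivWithin (m := m)
        (by exact_mod_cast Nat.lt_succ_of_le hmn) (uniqueDiffOn_Icc hab) z hz
      rw [iteratedDerivWithin_succ, Function.iterate_succ_apply']
      exact hdiff.hasDerivWithinAt.sub ((derivative^[m] p).hasDerivAt z).hasDerivWithinAt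
    have hmvt := (convex_Icc a b).norm_image_sub_le_of_norm_hasDerivWithin_le hderiv
      (fun z hz => (Real.norm_eq_abs _).trans_le (ih (by omega) hz (by omega)))
      (left_mem_Icc.mpr hab.le) hy
    rw [hpa m hmn, sub_self, sub_zero, Real.norm_eq_abs, Real.norm_eq_abs,
      abs_of_nonneg (sub_nonneg.mpr hy.1)] at hmvt
    have hM0 : 0 ≤ M := (abs_nonneg _).trans (hM a (left_mem_Icc.mpr hab.le))
    calc _ ≤ M * (b - a) ^ d * (y - a) := hmvt
      _ ≤ M * (b - a) ^ d * (b - a) := by gcongr; exact hy.2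
      _ = M * (b - a) ^ (d + 1) := by ring

theorem exists_natDegree_le_abs_iteratedDerivWithin_sub_le {f : ℝ → ℝ} {a b M : ℝ} {n : ℕ}
    (hab : a < b) (hf : ContDiffOn ℝ (n + 1) f (Icc a b))
    (hM : ∀ y ∈ Icc a b, |iteratedDerivWithin (n + 1) f (Icc a b) y| ≤ M) :
    ∃ p : ℝ[X], p.natDegree ≤ n ∧ ∀ m ≤ n + 1, ∀ y ∈ Icc a b,
      |iteratedDerivWithin m f (Icc a b) y - (derivative^[m] p).eval y|
        ≤ M * (b - a) ^ (n + 1 - m) := by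
  obtain ⟨p, hp, hpa⟩ := exists_natDegree_le_eval_iterate_derivative_eq a
    (fun m => iteratedDerivWithin m f (Icc a b) a) n
  exact ⟨p, hp, fun m hm y hy => abs_iteratedDerivWithin_sub_eval_le hab hf hM hp hpa hm hy⟩

noncomputable def legendrePoly (k : ℕ) : ℝ[X] :=
  C (1 / ((2 : ℝ) ^ k * k !)) * derivative^[k] ((X ^ 2 - 1) ^ k)

theorem legendreP_eq_eval (k : ℕ) : legendreP k = fun x => (legendrePoly k).eval x := by
  have hW : (fun y : ℝ => (y ^ 2 - 1) ^ k) = fun y => (((X : ℝ[X]) ^ 2 - 1) ^ k).eval y := by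
    simp
  ext x
  rw [legendreP, hW, iteratedDeriv_eval, legendrePoly, eval_mul, eval_C]

theorem continuous_legendreP (k : ℕ) : Continuous (legendreP k) := by
  rw [legendreP_eq_eval]
  exact (legendrePoly k).continuous

theorem natDegree_X_sq_sub_one_pow (k : ℕ) : (((X : ℝ[X]) ^ 2 - 1) ^ k).natDegree = 2 * k := by
  have h : ((X : ℝ[X]) ^ 2 - 1).natDegree = 2 := by
    simpa using natDegree_X_pow_sub_C (n := 2) (r := (1 : ℝ))
  rw [natDegree_pow, h, mul_comm]

theorem monic_X_sq_sub_one_pow (k : ℕ) : (((X : ℝ[X]) ^ 2 - 1) ^ k).Monic := by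
  simpa using (monic_X_pow_sub_C (1 : ℝ) two_ne_zero).pow k

theorem degree_legendrePoly (k : ℕ) : (legendrePoly k).degree = k := by
  have hdeg : (derivative^[k] (((X : ℝ[X]) ^ 2 - 1) ^ k)).natDegree ≤ k :=
    (natDegree_iterate_derivative _ _).trans (by rw [natDegree_X_sq_sub_one_pow]; omega)
  refine degree_eq_of_le_of_coeff_ne_zero ?_ ?_
  · exact degree_le_of_natDegree_le (by
      rw [legendrePoly]; exact (natDegree_C_mul_le _ _).trans hdeg)
  · have hlead : (((X : ℝ[X]) ^ 2 - 1) ^ k).coeff (k + k) = 1 := by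
      rw [← two_mul, ← natDegree_X_sq_sub_one_pow]
      exact (monic_X_sq_sub_one_pow k).coeff_natDegree
    have : (k + k).descFactorial k ≠ 0 := by
      rw [Ne, Nat.descFactorial_eq_zero_iff_lt]; omega
    rw [legendrePoly, coeff_C_mul, coeff_iterate_derivative, hlead]
    simp [this, Nat.factorial_ne_zero]

theorem natDegree_legendrePoly (k : ℕ) : (legendrePoly k).natDegree = k :=
  natDegree_eq_of_degree_eq_some (degree_legendrePoly k)

theorem eval_iterate_derivative_X_sq_sub_one_pow_eq_zero {k m : ℕ} (hm : m < k) {t : ℝ}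
    (ht : t ^ 2 = 1) : (derivative^[m] (((X : ℝ[X]) ^ 2 - 1) ^ k)).eval t = 0 := by
  obtain ⟨r, hr⟩ := pow_sub_dvd_iterate_derivative_pow ((X : ℝ[X]) ^ 2 - 1) k m
  rw [hr, eval_mul, eval_pow, eval_sub, eval_pow, eval_X, eval_one, ht, sub_self,
    zero_pow (by omega), zero_mul]

theorem integral_mul_iterate_derivative_X_sq_sub_one_pow (q : ℝ[X]) {k m : ℕ} (hm : m ≤ k) :
    ∫ x in (-1 : ℝ)..1, q.eval x * (derivative^[k] ((X ^ 2 - 1) ^ k)).eval x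
      = (-1) ^ m * ∫ x in (-1 : ℝ)..1,
          (derivative^[m] q).eval x * (derivative^[k - m] ((X ^ 2 - 1) ^ k)).eval x := by
  induction m with
  | zero => simp
  | succ m ih =>
    have hkm : k - m = k - (m + 1) + 1 := by omega
    rw [ih (by omega), hkm, Function.iterate_succ_apply',
      integral_eval_mul_derivative _ _
        (eval_iterate_derivative_X_sq_sub_one_pow_eq_zero (by omega) (by norm_num))
        (eval_iterate_derivative_X_sq_sub_one_pow_eq_zero (by omega) (by norm_num)),
      Function.iterate_succ_apply']
    ring

theorem integral_eval_mul_legendrePoly_eq_zero {q : ℝ[X]} {k : ℕ} (hq : q.natDegree < k) :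
    ∫ x in (-1 : ℝ)..1, q.eval x * (legendrePoly k).eval x = 0 := by
  simp only [legendrePoly, eval_mul, eval_C, mul_left_comm (q.eval _),
    intervalIntegral.integral_const_mul]
  rw [integral_mul_iterate_derivative_X_sq_sub_one_pow q le_rfl, iterate_derivative_eq_zero hq]
  simp

theorem integral_sq_sub_one_pow_succ (m : ℕ) :
    (2 * (m : ℝ) + 3) * ∫ x in (-1 : ℝ)..1, (x ^ 2 - 1) ^ (m + 1)
      = -((2 * (m : ℝ) + 2) * ∫ x in (-1 : ℝ)..1, (x ^ 2 - 1) ^ m) := by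
  have hderiv : ∀ x : ℝ, HasDerivAt (fun x => x * (x ^ 2 - 1) ^ (m + 1))
      ((2 * m + 3) * (x ^ 2 - 1) ^ (m + 1) + (2 * m + 2) * (x ^ 2 - 1) ^ m) x := by
    intro x
    refine ((hasDerivAt_id' x).mul (((hasDerivAt_pow 2 x).sub_const 1).pow (m + 1))).congr_deriv ?_
    simp only [Nat.add_sub_cancel, Pi.pow_apply]
    push_cast
    ring
  have hFTC := intervalIntegral.integral_eq_sub_of_hasDerivAt (a := -1) (b := 1)
    (fun x _ => hderiv x)
    (by apply Continuous.intervalIntegrable; fun_prop)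
  rw [intervalIntegral.integral_add (by apply Continuous.intervalIntegrable; fun_prop)
    (by apply Continuous.intervalIntegrable; fun_prop), intervalIntegral.integral_const_mul,
    intervalIntegral.integral_const_mul] at hFTC
  norm_num at hFTC
  linarith

theorem integral_sq_sub_one_pow (k : ℕ) :
    ∫ x in (-1 : ℝ)..1, (x ^ 2 - 1) ^ k
      = (-1) ^ k * 2 ^ (2 * k + 1) * (k ! : ℝ) ^ 2 / (2 * k + 1)! := by
  induction k with
  | zero => norm_num
  | succ m ih =>
    have hrec := integral_sq_sub_one_pow_succ m
    rw [ih] at hrec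
    have hf : ((2 * (m + 1) + 1)! : ℝ) = (2 * m + 3) * (2 * m + 2) * (2 * m + 1)! := by
      rw [show 2 * (m + 1) + 1 = 2 * m + 1 + 1 + 1 by ring, Nat.factorial_succ,
        Nat.factorial_succ]
      push_cast; ring
    rw [hf, Nat.factorial_succ]
    field_simp at hrec ⊢
    push_cast
    linear_combination (2 * (m:ℝ) + 2) * hrec

theorem integral_legendrePoly_mul_self (k : ℕ) :
    ∫ x in (-1 : ℝ)..1, (legendrePoly k).eval x * (legendrePoly k).eval x = 2 / (2 * k + 1) := by
  set c : ℝ := 1 / (2 ^ k * k !) with hc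
  have hD : derivative^[k] (legendrePoly k) = C (c * (2 * k)!) := by
    rw [legendrePoly, iterate_derivative_C_mul, ← Function.iterate_add_apply, ← two_mul,
      ← natDegree_X_sq_sub_one_pow, iterate_derivative_natDegree,
      (monic_X_sq_sub_one_pow k).leadingCoeff, natDegree_X_sq_sub_one_pow, mul_one, C_mul]
  calc ∫ x in (-1 : ℝ)..1, (legendrePoly k).eval x * (legendrePoly k).eval x
      = c * ∫ x in (-1 : ℝ)..1,
          (legendrePoly k).eval x * (derivative^[k] ((X ^ 2 - 1) ^ k)).eval x := by
        rw [← intervalIntegral.integral_const_mul]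
        congr 1 with x
        nth_rw 2 [legendrePoly]
        rw [eval_mul, eval_C]
        ring
    _ = c * ((-1) ^ k * (c * (2 * k)! * ∫ x in (-1 : ℝ)..1, (x ^ 2 - 1) ^ k)) := by
        rw [integral_mul_iterate_derivative_X_sq_sub_one_pow _ le_rfl, hD, Nat.sub_self]
        simp
    _ = 2 / (2 * k + 1) := by
        rw [integral_sq_sub_one_pow, hc, Nat.factorial_succ]
        push_cast
        field_simp
        rw [← pow_mul, pow_mul', neg_one_sq, one_pow, one_mul, ← pow_mul, pow_succ, mul_comm k 2]

theorem integral_legendrePoly_mul_legendrePoly (j k : ℕ) :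
    ∫ x in (-1 : ℝ)..1, (legendrePoly j).eval x * (legendrePoly k).eval x
      = if j = k then 2 / (2 * (k : ℝ) + 1) else 0 := by
  rcases lt_trichotomy j k with hjk | rfl | hkj
  · rw [if_neg hjk.ne, integral_eval_mul_legendrePoly_eq_zero (by rwa [natDegree_legendrePoly])]
  · rw [if_pos rfl, integral_legendrePoly_mul_self]
  · simp_rw [if_neg hkj.ne', mul_comm ((legendrePoly j).eval _)]
    exact integral_eval_mul_legendrePoly_eq_zero (by rwa [natDegree_legendrePoly])

noncomputable def legendreSeq : Polynomial.Sequence ℝ := ⟨legendrePoly, degree_legendrePoly⟩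

noncomputable def legendreCoeff (k : ℕ) : ℝ[X] →ₗ[ℝ] ℝ where
  toFun q := ∫ x in (-1 : ℝ)..1, q.eval x * (legendrePoly k).eval x
  map_add' p q := by
    simp only [eval_add, add_mul]
    exact intervalIntegral.integral_add (by apply Continuous.intervalIntegrable; fun_prop)
      (by apply Continuous.intervalIntegrable; fun_prop)
  map_smul' c q := by
    simp only [eval_smul, smul_eq_mul, mul_assoc, intervalIntegral.integral_const_mul,
      RingHom.id_apply]

@[simp]
theorem legendreCoeff_apply (k : ℕ) (q : ℝ[X]) :
    legendreCoeff k q = ∫ x in (-1 : ℝ)..1, q.eval x * (legendrePoly k).eval x :=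
  rfl

theorem sum_legendreCoeff_smul_legendrePoly {ℓ : ℕ} {q : ℝ[X]} (hq : q.natDegree ≤ ℓ) :
    ∑ k ∈ Finset.range (ℓ + 1), ((2 * k + 1) / 2 * legendreCoeff k q) • legendrePoly k = q := by
  let Q : ℝ[X] →ₗ[ℝ] ℝ[X] := ∑ k ∈ Finset.range (ℓ + 1),
    ((2 * k + 1) / 2 : ℝ) • (legendreCoeff k).smulRight (legendrePoly k)
  have hQ : ∀ p, Q p = ∑ k ∈ Finset.range (ℓ + 1),
      ((2 * k + 1) / 2 * legendreCoeff k p) • legendrePoly k := fun p => by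
    simp [Q, LinearMap.sum_apply, mul_smul]
  have hfix : degreeLE ℝ ℓ ≤ LinearMap.eqLocus Q LinearMap.id := by
    rw [← legendreSeq.span_degreeLE fun i _ => isUnit_iff_ne_zero.mpr (leadingCoeff_ne_zero.mpr
      (legendreSeq.ne_zero i)), Submodule.span_le]
    rintro _ ⟨j, hj, rfl⟩
    show Q (legendrePoly j) = legendrePoly j
    rw [hQ, Finset.sum_eq_single j]
    · rw [legendreCoeff_apply, integral_legendrePoly_mul_legendrePoly, if_pos rfl]
      field_simp
      exact one_smul ℝ _
    · intro k _ hkj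
      rw [legendreCoeff_apply, integral_legendrePoly_mul_legendrePoly, if_neg hkj.symm, mul_zero,
        zero_smul]
    · intro hj'
      exact absurd (Finset.mem_range.mpr (Nat.lt_succ_of_le hj)) hj'
  rw [← hQ]
  exact hfix (mem_degreeLE.mpr (natDegree_le_iff_degree_le.mp hq))

theorem integral_comp_two_mul_div_sub_one {h : ℝ} (hh : h ≠ 0) (f : ℝ → ℝ) :
    ∫ y in (0 : ℝ)..h, f (2 * y / h - 1) = h / 2 * ∫ u in (-1 : ℝ)..1, f u := by
  have := intervalIntegral.integral_comp_mul_sub (a := 0) (b := h) f (div_ne_zero two_ne_zero hh) 1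
  simp only [mul_zero, zero_sub, div_mul_cancel₀ _ hh, inv_div, smul_eq_mul] at this
  norm_num at this
  rw [← this]
  congr with y
  ring_nf

noncomputable def legProjCoeff (h : ℝ) (g : ℝ → ℝ) (j : ℕ) : ℝ :=
  (2 * j + 1) / h * ∫ y in (0 : ℝ)..h, g y * legendreP j (2 * y / h - 1)

theorem legProj_apply (ℓ : ℕ) (h : ℝ) (g : ℝ → ℝ) (x : ℝ) :
    legProj ℓ h g x = ∑ j ∈ Finset.range (ℓ + 1),
      legProjCoeff h g j * (legendrePoly j).eval (2 * x / h - 1) := by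
  refine Finset.sum_congr rfl fun j _ => ?_
  show legProjCoeff h g j * legendreP j _ = _
  rw [legendreP_eq_eval]

theorem legProj_eq_eval_sum (ℓ : ℕ) (h : ℝ) (g : ℝ → ℝ) :
    legProj ℓ h g = fun x => (∑ j ∈ Finset.range (ℓ + 1),
      C (legProjCoeff h g j) * (legendrePoly j).comp (C (2 / h) * X + C (-1))).eval x := by
  ext x
  rw [legProj_apply, eval_finsetSum]
  refine Finset.sum_congr rfl fun j _ => ?_
  simp only [eval_mul, eval_C, eval_comp, eval_add, eval_X]
  ring_nf

theorem iteratedDeriv_legProj (ℓ k : ℕ) (h : ℝ) (g : ℝ → ℝ) (x : ℝ) :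
    iteratedDeriv k (legProj ℓ h g) x = ∑ j ∈ Finset.range (ℓ + 1), legProjCoeff h g j *
      ((2 / h) ^ k * (derivative^[k] (legendrePoly j)).eval (2 * x / h - 1)) := by
  rw [legProj_eq_eval_sum, iteratedDeriv_eval]
  simp only [iterate_derivative_sum, eval_finsetSum]
  refine Finset.sum_congr rfl fun j _ => ?_
  simp only [iterate_derivative_C_mul, iterate_derivative_comp_C_mul_X_add_C, eval_mul, eval_C,
    eval_comp, eval_add, eval_X]
  ring_nf

theorem legProjCoeff_add {h : ℝ} {f g : ℝ → ℝ} (hf : IntervalIntegrable f volume 0 h)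
    (hg : IntervalIntegrable g volume 0 h) (j : ℕ) :
    legProjCoeff h (f + g) j = legProjCoeff h f j + legProjCoeff h g j := by
  have hφ : ContinuousOn (fun y => legendreP j (2 * y / h - 1)) (uIcc 0 h) :=
    ((continuous_legendreP j).comp (by fun_prop)).continuousOn
  simp only [legProjCoeff, Pi.add_apply, add_mul, ← mul_add]
  rw [intervalIntegral.integral_add (hf.mul_continuousOn hφ) (hg.mul_continuousOn hφ)]

theorem iteratedDeriv_legProj_add {ℓ k : ℕ} {h : ℝ} {f g : ℝ → ℝ}
    (hf : IntervalIntegrable f volume 0 h) (hg : IntervalIntegrable g volume 0 h) (x : ℝ) :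
    iteratedDeriv k (legProj ℓ h (f + g)) x
      = iteratedDeriv k (legProj ℓ h f) x + iteratedDeriv k (legProj ℓ h g) x := by
  simp only [iteratedDeriv_legProj, legProjCoeff_add hf hg, add_mul, Finset.sum_add_distrib]

theorem legProj_eval {ℓ : ℕ} {h : ℝ} (hh : h ≠ 0) {q : ℝ[X]} (hq : q.natDegree ≤ ℓ) :
    legProj ℓ h (fun y => q.eval y) = fun y => q.eval y := by
  -- `Q` is `q` in the variable `u = 2y/h - 1` of `[-1, 1]`.
  set Q := q.comp (C (h / 2) * X + C (h / 2))
  have hQ : ∀ y, Q.eval (2 * y / h - 1) = q.eval y := fun y => by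
    simp only [Q, eval_comp, eval_add, eval_mul, eval_C, eval_X]
    congr 1
    field_simp
    ring
  have hQdeg : Q.natDegree ≤ ℓ :=
    natDegree_comp_le.trans (by nlinarith [natDegree_linear_le (a := h / 2) (b := h / 2)])
  have hcoeff : ∀ j, legProjCoeff h (fun y => q.eval y) j = (2 * j + 1) / 2 * legendreCoeff j Q :=
    fun j => by
      simp only [legProjCoeff, legendreP_eq_eval, ← hQ]
      rw [integral_comp_two_mul_div_sub_one hh (fun u => Q.eval u * (legendrePoly j).eval u),
        legendreCoeff_apply]
      field_simp
  ext x
  have := congrArg (eval (2 * x / h - 1)) (sum_legendreCoeff_smul_legendrePoly hQdeg)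
  simp only [eval_finsetSum, eval_smul, smul_eq_mul, hQ] at this
  rw [← this, legProj_apply]
  exact Finset.sum_congr rfl fun j _ => by rw [hcoeff]

theorem iteratedDeriv_legProj_eval_add {ℓ k : ℕ} {h : ℝ} (hh : h ≠ 0) {T : ℝ[X]}
    (hT : T.natDegree ≤ ℓ) {R : ℝ → ℝ} (hR : IntervalIntegrable R volume 0 h) (x : ℝ) :
    iteratedDeriv k (legProj ℓ h (fun y => T.eval y + R y)) x
      = (derivative^[k] T).eval x + iteratedDeriv k (legProj ℓ h R) x := by
  rw [← Pi.add_def (fun y => T.eval y) R,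
    iteratedDeriv_legProj_add (T.continuous.intervalIntegrable _ _) hR, legProj_eval hh hT,
    iteratedDeriv_eval]

theorem two_mul_div_sub_one_mem_Icc {h y : ℝ} (hh : 0 < h) (hy : y ∈ Icc 0 h) :
    2 * y / h - 1 ∈ Icc (-1 : ℝ) 1 := by
  have h0 : 0 ≤ 2 * y / h := by have := hy.1; positivity
  have h2 : 2 * y / h ≤ 2 := by rw [div_le_iff₀ hh]; linarith [hy.2]
  constructor <;> linarith

theorem exists_abs_iterate_derivative_legendrePoly_le (ℓ : ℕ) :
    ∃ B, ∀ j ≤ ℓ, ∀ m ≤ ℓ, ∀ t ∈ Icc (-1 : ℝ) 1,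
      |(derivative^[m] (legendrePoly j)).eval t| ≤ B := by
  obtain ⟨B, hB⟩ := exists_forall_abs_eval_le ((Finset.range (ℓ + 1) ×ˢ Finset.range (ℓ + 1)).image
    fun jm => derivative^[jm.2] (legendrePoly jm.1)) isCompact_Icc
  refine ⟨B, fun j hj m hm => hB _ (Finset.mem_image.mpr ⟨(j, m), ?_, rfl⟩)⟩
  simp only [Finset.mem_product, Finset.mem_range]
  omega

theorem abs_legProjCoeff_le {h K B : ℝ} (hh : 0 < h) {g : ℝ → ℝ}
    (hg : ∀ y ∈ Icc 0 h, |g y| ≤ K) {j : ℕ}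
    (hB : ∀ t ∈ Icc (-1 : ℝ) 1, |(legendrePoly j).eval t| ≤ B) :
    |legProjCoeff h g j| ≤ (2 * j + 1) * K * B := by
  have hK : 0 ≤ K := (abs_nonneg _).trans (hg 0 ⟨le_rfl, hh.le⟩)
  have hint : |∫ y in (0 : ℝ)..h, g y * legendreP j (2 * y / h - 1)| ≤ K * B * h := by
    have hbound : ∀ y ∈ uIoc (0 : ℝ) h, ‖g y * legendreP j (2 * y / h - 1)‖ ≤ K * B := by
      intro y hy
      rw [uIoc_of_le hh.le] at hy
      have hy' : y ∈ Icc 0 h := Ioc_subset_Icc_self hy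
      rw [Real.norm_eq_abs, abs_mul, legendreP_eq_eval]
      exact mul_le_mul (hg y hy') (hB _ (two_mul_div_sub_one_mem_Icc hh hy')) (abs_nonneg _) hK
    simpa [abs_of_pos hh] using intervalIntegral.norm_integral_le_of_norm_le_const hbound
  rw [legProjCoeff, abs_mul, abs_of_pos (by positivity)]
  calc (2 * j + 1) / h * |∫ y in (0 : ℝ)..h, g y * legendreP j (2 * y / h - 1)|
      ≤ (2 * j + 1) / h * (K * B * h) := by gcongr
    _ = (2 * j + 1) * K * B := by field_simp

theorem exists_abs_iteratedDeriv_legProj_le (ℓ : ℕ) :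
    ∃ C ≥ 0, ∀ h > 0, ∀ g : ℝ → ℝ, ∀ K, (∀ y ∈ Icc 0 h, |g y| ≤ K) →
      ∀ k ≤ ℓ, ∀ x ∈ Icc 0 h, |iteratedDeriv k (legProj ℓ h g) x| ≤ C * K / h ^ k := by
  obtain ⟨B, hB⟩ := exists_abs_iterate_derivative_legendrePoly_le ℓ
  have hB0 : 0 ≤ B := (abs_nonneg _).trans (hB 0 (Nat.zero_le _) 0 (Nat.zero_le _) 0 (by norm_num))
  refine ⟨(ℓ + 1) * ((2 * ℓ + 1) * B * (2 ^ ℓ * B)), by positivity,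
    fun h hh g K hg k hk x hx => ?_⟩
  have hK : 0 ≤ K := (abs_nonneg _).trans (hg 0 ⟨le_rfl, hh.le⟩)
  have hterm : ∀ j ∈ Finset.range (ℓ + 1), |legProjCoeff h g j *
      ((2 / h) ^ k * (derivative^[k] (legendrePoly j)).eval (2 * x / h - 1))|
        ≤ (2 * ℓ + 1) * K * B * (2 ^ ℓ / h ^ k * B) := by
    intro j hj
    have hjℓ : j ≤ ℓ := Nat.lt_succ_iff.mp (Finset.mem_range.mp hj)
    rw [abs_mul, abs_mul, abs_of_pos (by positivity : (0 : ℝ) < (2 / h) ^ k), div_pow]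
    gcongr
    · exact (abs_legProjCoeff_le hh hg (hB j hjℓ 0 (Nat.zero_le _))).trans
        (by gcongr)
    · norm_num
    · exact hB j hjℓ k hk _ (two_mul_div_sub_one_mem_Icc hh hx)
  rw [iteratedDeriv_legProj]
  calc _ ≤ _ := Finset.abs_sum_le_sum_abs _ _
    _ ≤ ∑ _j ∈ Finset.range (ℓ + 1), (2 * ℓ + 1) * K * B * (2 ^ ℓ / h ^ k * B) :=
        Finset.sum_le_sum hterm
    _ = _ := by
        rw [Finset.sum_const, Finset.card_range, nsmul_eq_mul]
        push_cast
        ring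

/-- (Jackson-type estimate for the Legendre projection.) For every
`ℓ ≥ 0` there is a constant `C = C(ℓ)` such that for all `h > 0`, all
`g ∈ C^{ℓ+1}([0,h])`, and all `k ∈ {0,…,ℓ}`:
`sup_{x ∈ [0,h]} |g⁽ᵏ⁾(x) - (Pg)⁽ᵏ⁾(x)| ≤ C h^{ℓ-k+1} sup_{x ∈ [0,h]} |g⁽ℓ⁺¹⁾(x)|`. -/
theorem legProj_jackson_estimate (ℓ : ℕ) :
    ∃ C : ℝ, 0 < C ∧
      ∀ h : ℝ, 0 < h → ∀ g : ℝ → ℝ, ContDiffOn ℝ (ℓ + 1) g (Set.Icc 0 h) →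
      ∀ M : ℝ, (∀ y ∈ Set.Icc (0:ℝ) h, |iteratedDerivWithin (ℓ + 1) g (Set.Icc 0 h) y| ≤ M) →
      ∀ k ≤ ℓ, ∀ x ∈ Set.Icc (0:ℝ) h,
        |iteratedDerivWithin k g (Set.Icc 0 h) x - iteratedDeriv k (legProj ℓ h g) x|
          ≤ C * h ^ (ℓ - k + 1) * M := by
  obtain ⟨C₀, hC₀, hproj⟩ := exists_abs_iteratedDeriv_legProj_le ℓ
  refine ⟨C₀ + 1, by positivity, fun h hh g hg M hM k hk x hx => ?_⟩
  obtain ⟨T, hTdeg, htaylor⟩ := exists_natDegree_le_abs_iteratedDerivWithin_sub_le hh hg hM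
  set R := fun y => g y - T.eval y
  have hR : ∀ y ∈ Icc 0 h, |R y| ≤ M * h ^ (ℓ + 1) := fun y hy => by
    simpa using htaylor 0 (Nat.zero_le _) y hy
  have hRint : IntervalIntegrable R volume 0 h :=
    (hg.continuousOn.sub T.continuous.continuousOn).intervalIntegrable_of_Icc hh.le
  have hsplit : iteratedDeriv k (legProj ℓ h g) x
      = (derivative^[k] T).eval x + iteratedDeriv k (legProj ℓ h R) x := by
    rw [← iteratedDeriv_legProj_eval_add hh.ne' hTdeg hRint]
    simp [R]
  calc _ = |(iteratedDerivWithin k g (Icc 0 h) x - (derivative^[k] T).eval x)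
          - iteratedDeriv k (legProj ℓ h R) x| := by rw [hsplit, sub_add_eq_sub_sub]
    _ ≤ M * h ^ (ℓ + 1 - k) + C₀ * (M * h ^ (ℓ + 1)) / h ^ k :=
        (abs_sub _ _).trans (add_le_add (by simpa using htaylor k (by omega) x hx)
          (hproj h hh R _ hR k hk x hx))
    _ = (C₀ + 1) * h ^ (ℓ - k + 1) * M := by
        rw [mul_div_assoc, mul_div_assoc, div_eq_mul_inv,
          ← pow_sub₀ h hh.ne' (by omega : k ≤ ℓ + 1), show ℓ + 1 - k = ℓ - k + 1 by omega]
        ring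
end

section
/- (Smoothing of a piecewise polynomial with a jump.) Let ℓ ≥ 0 be an integer, h > 0, x₀ ∈ (0,h), and let q₁, q₂ be real polynomials of degree at most ℓ. Define g : [0,h] → ℝ by g = q₁ on [0,x₀] and g = q₂ on (x₀,h], and set ε^{(k)} = q₂^{(k)}(x₀) − q₁^{(k)}(x₀) for k = 0,…,ℓ. Define the polynomial p(x) = (ε^{(ℓ)}/h) x^{ℓ+1}/(ℓ+1)! + Σ_{k=0}^{ℓ} q₁^{(k)}(0) x^k / k!. Then the (ℓ+1)st derivative of p is the constant ε^{(ℓ)}/h, and for every x ∈ [0,h] with x ≠ x₀ one has |p(x) − g(x)| ≤ 2 Σ_{k=0}^{ℓ} |ε^{(k)}| h^k. -/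
/-!
Since `q₁` has degree at most `ℓ`, the sum in `p` is the Taylor expansion of `q₁` at `0`, i.e.
`q₁` itself, so `p = q₁ + (ε ℓ / h) x^(ℓ+1)/(ℓ+1)!`. This gives the derivative claim and
`|p - q₁| ≤ |ε ℓ| h^ℓ` on `[0, h]`. Right of `x₀` one also pays `|q₂ - q₁|`, which the Taylor
expansion of `q₂ - q₁` at `x₀` bounds by `Σ |ε k| h^k`, as `|x - x₀| ≤ h`.
-/

open MeasureTheory Real Set Polynomial

open Finset in
theorem Polynomial.eval_eq_sum_range_taylor {R : Type*} [Field R] [CharZero R] {q : R[X]} {n : ℕ}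
    (hq : q.natDegree ≤ n) (a x : R) :
    q.eval x = ∑ k ∈ range (n + 1), (derivative^[k] q).eval a * (x - a) ^ k / k.factorial := by
  rw [← taylor_eval_sub a q x,
    eval_eq_sum_range' ((natDegree_taylor q a).trans_lt (Nat.lt_succ_of_le hq))]
  refine sum_congr rfl fun k _ => ?_
  have hk : (k.factorial : R) ≠ 0 := Nat.cast_ne_zero.2 k.factorial_ne_zero
  rw [taylor_coeff, ← factorial_smul_hasseDeriv, LinearMap.smul_apply, eval_smul,
    nsmul_eq_mul]
  field_simp

theorem Polynomial.iteratedDeriv_eval_s7 {𝕜 : Type*} [NontriviallyNormedField 𝕜] (n : ℕ) (q : 𝕜[X]) :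
    iteratedDeriv n (fun x => q.eval x) = fun x => (derivative^[n] q).eval x := by
  induction n generalizing q with
  | zero => simp
  | succ n ih =>
    have hderiv : _root_.deriv (fun x => q.eval x) = fun x => (derivative q).eval x :=
      _root_.funext fun _ => q.deriv
    rw [iteratedDeriv_succ', hderiv, ih, Function.iterate_succ_apply]

theorem Polynomial.iterate_derivative_C_mul_X_pow_succ_add {R : Type*} [CommSemiring R] (a : R)
    {q : R[X]} {n : ℕ} (hq : q.natDegree ≤ n) :
    derivative^[n + 1] (C a * X ^ (n + 1) + q) = C (a * (n + 1).factorial) := by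
  rw [iterate_map_add, iterate_derivative_eq_zero (Nat.lt_succ_of_le hq), add_zero,
    iterate_derivative_C_mul, iterate_derivative_X_pow_eq_C_mul, Nat.descFactorial_self,
    Nat.sub_self, pow_zero, mul_one, ← C_mul]

theorem Polynomial.iteratedDeriv_mul_pow_succ_div_factorial_add_eval {𝕜 : Type*}
    [NontriviallyNormedField 𝕜] [CharZero 𝕜] (a : 𝕜) {q : 𝕜[X]} {n : ℕ} (hq : q.natDegree ≤ n)
    (x : 𝕜) :
    iteratedDeriv (n + 1) (fun y => a * y ^ (n + 1) / (n + 1).factorial + q.eval y) x = a := by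
  have hpoly : (fun y => a * y ^ (n + 1) / (n + 1).factorial + q.eval y) =
      fun y => (C (a / (n + 1).factorial) * X ^ (n + 1) + q).eval y := by
    funext y
    simp only [eval_add, eval_mul, eval_C, eval_pow, eval_X]
    ring
  have hfact : ((n + 1).factorial : 𝕜) ≠ 0 := Nat.cast_ne_zero.2 (n + 1).factorial_ne_zero
  rw [hpoly, iteratedDeriv_eval_s7, iterate_derivative_C_mul_X_pow_succ_add _ hq]
  simp only [eval_C]
  field_simp

theorem abs_mul_pow_div_factorial_le {a y h : ℝ} (hy : |y| ≤ h) (k : ℕ) :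
    |a * y ^ k / k.factorial| ≤ |a| * h ^ k := by
  rw [abs_div, abs_mul, abs_pow, Nat.abs_cast]
  calc |a| * |y| ^ k / k.factorial ≤ |a| * |y| ^ k :=
        div_le_self (by positivity) (Nat.one_le_cast.2 k.factorial_pos)
    _ ≤ |a| * h ^ k := by gcongr

theorem abs_div_mul_pow_succ_div_factorial_le (a : ℝ) {x h : ℝ} (hh : 0 < h) (hx : x ∈ Icc 0 h)
    (n : ℕ) : |a / h * x ^ (n + 1) / (n + 1).factorial| ≤ |a| * h ^ n :=
  calc |a / h * x ^ (n + 1) / (n + 1).factorial| ≤ |a / h| * h ^ (n + 1) :=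
        abs_mul_pow_div_factorial_le (abs_le.2 ⟨by linarith [hx.1], hx.2⟩) (n + 1)
    _ = |a| * h ^ n := by rw [abs_div, abs_of_pos hh, pow_succ]; field_simp

theorem Polynomial.abs_eval_le_sum_range_taylor {q : ℝ[X]} {n : ℕ} (hq : q.natDegree ≤ n)
    {a x h : ℝ} (hx : |x - a| ≤ h) :
    |q.eval x| ≤ ∑ k ∈ Finset.range (n + 1), |(derivative^[k] q).eval a| * h ^ k := by
  rw [eval_eq_sum_range_taylor hq a x]
  exact (Finset.abs_sum_le_sum_abs _ _).trans
    (Finset.sum_le_sum fun k _ => abs_mul_pow_div_factorial_le hx k)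

theorem smoothing_piecewise_polynomial_general
    (ℓ : ℕ) (h x₀ : ℝ) (hx₀ : x₀ ∈ Set.Ioo (0:ℝ) h)
    (q₁ q₂ : Polynomial ℝ) (hq₁ : q₁.natDegree ≤ ℓ) (hq₂ : q₂.natDegree ≤ ℓ)
    (ε : ℕ → ℝ)
    (hε : ∀ k, ε k =
      ((Polynomial.derivative (R := ℝ))^[k] q₂).eval x₀ -
      ((Polynomial.derivative (R := ℝ))^[k] q₁).eval x₀)
    (p : ℝ → ℝ)
    (hp : ∀ x, p x = (ε ℓ / h) * x ^ (ℓ + 1) / (Nat.factorial (ℓ + 1) : ℝ) +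
      ∑ k ∈ Finset.range (ℓ + 1),
        ((Polynomial.derivative (R := ℝ))^[k] q₁).eval 0 * x ^ k / (Nat.factorial k : ℝ))
    (g : ℝ → ℝ)
    (hg : ∀ x, g x = if x ≤ x₀ then q₁.eval x else q₂.eval x) :
    (∀ x : ℝ, iteratedDeriv (ℓ + 1) p x = ε ℓ / h) ∧
    (∀ x ∈ Set.Icc (0:ℝ) h, x ≠ x₀ →
      |p x - g x| ≤ 2 * ∑ k ∈ Finset.range (ℓ + 1), |ε k| * h ^ k) := by
  have hh : 0 < h := hx₀.1.trans hx₀.2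
  set S := ∑ k ∈ Finset.range (ℓ + 1), |ε k| * h ^ k
  have hp_sub (x : ℝ) : p x - q₁.eval x = ε ℓ / h * x ^ (ℓ + 1) / (ℓ + 1).factorial := by
    rw [hp, eval_eq_sum_range_taylor hq₁ 0 x]
    simp only [sub_zero, add_sub_cancel_right]
  have hsmooth_le : ∀ x ∈ Icc 0 h, |p x - q₁.eval x| ≤ S := fun x hx =>
    hp_sub x ▸ (abs_div_mul_pow_succ_div_factorial_le _ hh hx ℓ).trans
      (Finset.single_le_sum (f := fun k => |ε k| * h ^ k) (fun k _ => by positivity)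
        (Finset.self_mem_range_succ ℓ))
  have hjump_le : ∀ x ∈ Icc 0 h, |q₂.eval x - q₁.eval x| ≤ S := fun x hx => by
    have hdist : |x - x₀| ≤ h :=
      abs_sub_le_iff.2 ⟨by linarith [hx.2, hx₀.1], by linarith [hx.1, hx₀.2]⟩
    simpa only [eval_sub, iterate_derivative_sub, ← hε] using
      abs_eval_le_sum_range_taylor ((natDegree_sub_le _ _).trans (max_le hq₂ hq₁)) hdist
  refine ⟨fun x => ?_, fun x hx _ => ?_⟩
  · rw [show p = _ from funext fun y => eq_add_of_sub_eq (hp_sub y)]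
    exact iteratedDeriv_mul_pow_succ_div_factorial_add_eval _ hq₁ x
  · have hS : 0 ≤ S := Finset.sum_nonneg fun k _ => by positivity
    rw [hg]
    split_ifs
    · linarith [hsmooth_le x hx]
    · calc |p x - q₂.eval x| ≤ |p x - q₁.eval x| + |q₂.eval x - q₁.eval x| := by
            simpa only [abs_sub_comm (q₁.eval x)] using abs_sub_le (p x) (q₁.eval x) (q₂.eval x)
        _ ≤ 2 * S := by linarith [hsmooth_le x hx, hjump_le x hx]

/-- (Smoothing of a piecewise polynomial with a jump.) Let `q₁, q₂` be
polynomials of degree at most `ℓ`, let `g = q₁` on `[0,x₀]` and `g = q₂` on `(x₀,h]`,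
and let `ε k = q₂⁽ᵏ⁾(x₀) - q₁⁽ᵏ⁾(x₀)`. For the smoothed polynomial
`p(x) = (ε ℓ / h) xℓ⁺¹/(ℓ+1)! + Σ_{k≤ℓ} q₁⁽ᵏ⁾(0) xᵏ/k!` one has
`p⁽ℓ⁺¹⁾ ≡ ε ℓ / h` and `|p(x) - g(x)| ≤ 2 Σ_{k≤ℓ} |ε k| hᵏ` for `x ∈ [0,h] \ {x₀}`. -/
theorem smoothing_piecewise_polynomial
    (ℓ : ℕ) (h x₀ : ℝ) (hh : 0 < h) (hx₀ : x₀ ∈ Set.Ioo (0:ℝ) h)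
    (q₁ q₂ : Polynomial ℝ) (hq₁ : q₁.natDegree ≤ ℓ) (hq₂ : q₂.natDegree ≤ ℓ)
    (ε : ℕ → ℝ)
    (hε : ∀ k, ε k =
      ((Polynomial.derivative (R := ℝ))^[k] q₂).eval x₀ -
      ((Polynomial.derivative (R := ℝ))^[k] q₁).eval x₀)
    (p : ℝ → ℝ)
    (hp : ∀ x, p x = (ε ℓ / h) * x ^ (ℓ + 1) / (Nat.factorial (ℓ + 1) : ℝ) +
      ∑ k ∈ Finset.range (ℓ + 1),
        ((Polynomial.derivative (R := ℝ))^[k] q₁).eval 0 * x ^ k / (Nat.factorial k : ℝ))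
    (g : ℝ → ℝ)
    (hg : ∀ x, g x = if x ≤ x₀ then q₁.eval x else q₂.eval x) :
    (∀ x : ℝ, iteratedDeriv (ℓ + 1) p x = ε ℓ / h) ∧
    (∀ x ∈ Set.Icc (0:ℝ) h, x ≠ x₀ →
      |p x - g x| ≤ 2 * ∑ k ∈ Finset.range (ℓ + 1), |ε k| * h ^ k) :=
  smoothing_piecewise_polynomial_general ℓ h x₀ hx₀ q₁ q₂ hq₁ hq₂ ε hε p hp g hg
end

section
/- (Electric energy of the free-streaming solution.) Define f(t,x,v) = (e^{−v²/2}/√(2π)) (1 + 0.01 cos(0.5 x − 0.5 v t)) for t ≥ 0, x ∈ [0,4π], v ∈ ℝ. Then f(t,x,v) = f(0, x − vt, v) solves the advection equation ∂_t f = −v ∂_x f, and the electric energy 𝓔(t) = ∫₀^{4π} E(f(t,·,·),x)² dx, computed with L = 4π, satisfies 𝓔(t) = (π/1250) e^{−t²/4} for all t ≥ 0. -/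
/-!
Averaged against the Maxwellian, the mode `cos (k (x - v t))` becomes the Gaussian characteristic
function `exp (-(k t)² / 2)` times `cos (k x)`, so the charge density of the free-streaming
solution is `1 + a cos (k x)` with `a = 0.01 exp (-t² / 8)` and `k = 1/2` (phase mixing).
Writing the kernel as `y / L - 1 + 𝟙[y < x]`, the field of such a density is `∫₀ˣ (ρ - 1)` plus a
constant that vanishes when `k L ∈ 2πℤ`; so `E = (a / k) sin (k x)`, of energy `(a / k)² L / 2`.
-/

open MeasureTheory Real Set

open ProbabilityTheory Complex in
lemma integral_cos_gaussianReal (μ : ℝ) (σ : NNReal) (a b : ℝ) :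
    ∫ v, Real.cos (a + b * v) ∂gaussianReal μ σ
      = Real.exp (-σ * b ^ 2 / 2) * Real.cos (a + b * μ) := by
  have hint : Integrable (fun v : ℝ => cexp (↑(a + b * v) * I)) (gaussianReal μ σ) :=
    Integrable.of_bound (by fun_prop) 1 (.of_forall fun v => (norm_exp_ofReal_mul_I _).le)
  calc ∫ v, Real.cos (a + b * v) ∂gaussianReal μ σ
      = (∫ v, cexp (↑(a + b * v) * I) ∂gaussianReal μ σ).re := by
        rw [← RCLike.re_to_complex, ← integral_re hint]
        simp only [RCLike.re_to_complex, exp_ofReal_mul_I_re]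
    _ = (cexp (a * I) * charFun (gaussianReal μ σ) b).re := by
        rw [charFun_apply_real, ← integral_const_mul]
        congr 2 with v
        rw [← Complex.exp_add]
        push_cast
        ring_nf
    _ = Real.exp (-σ * b ^ 2 / 2) * Real.cos (a + b * μ) := by
        have hexponent : ↑a * I + (↑b * ↑μ * I - ↑↑σ * ↑b ^ 2 / 2)
            = ↑(-σ * b ^ 2 / 2 : ℝ) + ↑(a + b * μ : ℝ) * I := by
          push_cast
          ring
        rw [charFun_gaussianReal, ← Complex.exp_add, hexponent, Complex.exp_add,
          ← Complex.ofReal_exp, Complex.re_ofReal_mul, exp_ofReal_mul_I_re]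

open ProbabilityTheory in
lemma integral_gaussianPDF_mul_one_add_cos (α k x t : ℝ) :
    ∫ v, Real.exp (-v ^ 2 / 2) / √(2 * π) * (1 + α * Real.cos (k * x - k * v * t))
      = 1 + α * Real.exp (-(k * t) ^ 2 / 2) * Real.cos (k * x) := by
  have hcos : Integrable (fun v => α * Real.cos (k * x + -(k * t) * v)) (gaussianReal 0 1) :=
    Integrable.of_bound (by fun_prop) |α| (.of_forall fun v => by
      simpa using mul_le_of_le_one_right (abs_nonneg α) (abs_cos_le_one _))
  calc ∫ v, Real.exp (-v ^ 2 / 2) / √(2 * π) * (1 + α * Real.cos (k * x - k * v * t))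
      = ∫ v, (1 + α * Real.cos (k * x + -(k * t) * v)) ∂gaussianReal 0 1 := by
        rw [integral_gaussianReal_eq_integral_smul one_ne_zero]
        congr with v
        simp only [gaussianPDFReal, smul_eq_mul]
        push_cast
        ring_nf
    _ = 1 + α * Real.exp (-(k * t) ^ 2 / 2) * Real.cos (k * x) := by
        rw [integral_add (integrable_const 1) hcos, integral_const_mul, integral_cos_gaussianReal,
          integral_const, probReal_univ, one_smul, NNReal.coe_one, neg_one_mul, mul_zero, add_zero,
          neg_sq]
        ring

lemma hasDerivAt_comp_sub_mul {F : ℝ → ℝ} (hF : Differentiable ℝ F) (x v t : ℝ) :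
    HasDerivAt (fun s => F (x - v * s)) (-v * deriv (fun y => F (y - v * t)) x) t := by
  rw [deriv_comp_sub_const, mul_comm]
  exact (hF _).hasDerivAt.comp t (by simpa using ((hasDerivAt_id t).const_mul v).const_sub x)

lemma Efield_eq_const_add_integral {L x : ℝ} {f : ℝ → ℝ → ℝ} (hx : x ∈ Icc 0 L)
    (hρ : IntervalIntegrable (fun y => (∫ v, f y v) - 1) volume 0 L) :
    Efield L f x = (∫ y in 0..L, (y / L - 1) * ((∫ v, f y v) - 1))
      + ∫ y in 0..x, ((∫ v, f y v) - 1) := by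
  set ρ := fun y => (∫ v, f y v) - 1
  have hkernel : ∀ y, (if y < x then y / L else y / L - 1) * ρ y
      = (y / L - 1) * ρ y + (Iio x).indicator ρ y := by
    intro y
    simp only [indicator_apply, mem_Iio]
    split_ifs <;> ring
  have hind : (Iio x).indicator ρ =ᵐ[volume] {y | y ≤ x}.indicator ρ :=
    indicator_ae_eq_of_ae_eq_set Iio_ae_eq_Iic
  have hρ_ind : IntervalIntegrable ((Iio x).indicator ρ) volume 0 L :=
    intervalIntegrable_iff.2 ((intervalIntegrable_iff.1 hρ).indicator measurableSet_Iio)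
  rw [Efield, intervalIntegral.integral_congr (fun y _ => hkernel y),
    intervalIntegral.integral_add (hρ.continuousOn_mul (by fun_prop)) hρ_ind,
    intervalIntegral.integral_congr_ae (hind.mono fun y hy _ => hy),
    intervalIntegral.integral_indicator hx]

lemma integral_div_sub_one_mul_cos_eq_zero {k L : ℝ} (hk : k ≠ 0) (hkL : Real.cos (k * L) = 1) :
    ∫ y in 0..L, (y / L - 1) * Real.cos (k * y) = 0 := by
  rcases eq_or_ne L 0 with rfl | hL
  · simp
  have hderiv : ∀ y, HasDerivAt
      (fun y => (y / L - 1) * Real.sin (k * y) / k + Real.cos (k * y) / (k ^ 2 * L))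
      ((y / L - 1) * Real.cos (k * y)) y := by
    intro y
    have hky := (hasDerivAt_id' y).const_mul k
    refine (((((hasDerivAt_id' y).div_const L).sub_const 1).mul hky.sin).div_const k
      |>.add (hky.cos.div_const (k ^ 2 * L))).congr_deriv ?_
    field_simp
    ring
  rw [intervalIntegral.integral_eq_sub_of_hasDerivAt (fun y _ => hderiv y)
    (Continuous.intervalIntegrable (by fun_prop) _ _)]
  simp [hkL, div_self hL]

lemma integral_sin_mul_sq {k L : ℝ} (hk : k ≠ 0) (hkL : Real.cos (k * L) = 1) :
    ∫ x in 0..L, Real.sin (k * x) ^ 2 = L / 2 := by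
  have hsin : Real.sin (k * L) = 0 := by nlinarith [sin_sq_add_cos_sq (k * L)]
  rw [intervalIntegral.integral_comp_mul_left (fun x => Real.sin x ^ 2) hk, integral_sin_sq,
    mul_zero, sin_zero, hsin, smul_eq_mul]
  field_simp
  ring

lemma Efield_eq_of_integral_eq_one_add_cos {L k a x : ℝ} {f : ℝ → ℝ → ℝ} (hk : k ≠ 0)
    (hkL : Real.cos (k * L) = 1) (hf : ∀ y, ∫ v, f y v = 1 + a * Real.cos (k * y))
    (hx : x ∈ Icc 0 L) :
    Efield L f x = a / k * Real.sin (k * x) := by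
  have hρ : IntervalIntegrable (fun y => (∫ v, f y v) - 1) volume 0 L := by
    simp_rw [hf]
    exact Continuous.intervalIntegrable (by fun_prop) _ _
  simp_rw [Efield_eq_const_add_integral hx hρ, hf, add_sub_cancel_left, mul_left_comm _ a,
    intervalIntegral.integral_const_mul, integral_div_sub_one_mul_cos_eq_zero hk hkL,
    intervalIntegral.integral_comp_mul_left _ hk, integral_cos, mul_zero, sin_zero, sub_zero,
    smul_eq_mul, zero_add]
  ring

lemma integral_sq_Efield_of_integral_eq_one_add_cos {L k a : ℝ} {f : ℝ → ℝ → ℝ} (hk : k ≠ 0)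
    (hkL : Real.cos (k * L) = 1) (hf : ∀ y, ∫ v, f y v = 1 + a * Real.cos (k * y)) (hL : 0 ≤ L) :
    ∫ x in 0..L, Efield L f x ^ 2 = (a / k) ^ 2 * L / 2 := by
  have hE : EqOn (fun x => Efield L f x ^ 2) (fun x => (a / k * Real.sin (k * x)) ^ 2)
      (uIcc 0 L) := fun x hx => by
    rw [uIcc_of_le hL] at hx
    simp only [Efield_eq_of_integral_eq_one_add_cos hk hkL hf hx]
  rw [intervalIntegral.integral_congr hE]
  simp_rw [mul_pow, intervalIntegral.integral_const_mul, integral_sin_mul_sq hk hkL]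
  ring

/-- (Electric energy of the free-streaming solution.) The function
`f(t,x,v) = (e^{-v²/2}/√(2π))(1 + 0.01 cos(0.5x - 0.5vt))` satisfies
`f(t,x,v) = f(0, x - vt, v)`, solves the advection equation `∂ₜ f = -v ∂ₓ f`, and its
electric energy (with `L = 4π`) is `𝓔(t) = (π/1250) e^{-t²/4}` for all `t ≥ 0`. -/
theorem free_streaming_electric_energy
    (f : ℝ → ℝ → ℝ → ℝ)
    (hf : ∀ t x v, f t x v =
      Real.exp (-v ^ 2 / 2) / Real.sqrt (2 * π) * (1 + 0.01 * Real.cos (0.5 * x - 0.5 * v * t))) :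
    (∀ t x v, f t x v = f 0 (x - v * t) v) ∧
    (∀ t x v, HasDerivAt (fun s => f s x v) (-v * deriv (fun y => f t y v) x) t) ∧
    (∀ t : ℝ, 0 ≤ t →
      (∫ x in (0:ℝ)..(4 * π), (Efield (4 * π) (f t) x) ^ 2)
        = π / 1250 * Real.exp (-t ^ 2 / 4)) := by
  obtain ⟨F, hFd, hF⟩ : ∃ F : ℝ → ℝ → ℝ,
      (∀ v, Differentiable ℝ (F v)) ∧ ∀ t x v, f t x v = F v (x - v * t) :=
    ⟨fun v z => Real.exp (-v ^ 2 / 2) / √(2 * π) * (1 + 0.01 * Real.cos (0.5 * z)),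
      fun v => by fun_prop, fun t x v => by rw [hf]; ring_nf⟩
  refine ⟨fun t x v => by simp [hF], fun t x v => ?_, fun t _ => ?_⟩
  · simpa only [hF] using hasDerivAt_comp_sub_mul (hFd v) x v t
  · have hρ : ∀ y, ∫ v, f t y v
        = 1 + 0.01 * Real.exp (-(0.5 * t) ^ 2 / 2) * Real.cos (0.5 * y) := fun y => by
      simp only [hf]
      exact integral_gaussianPDF_mul_one_add_cos _ _ _ _
    have hkL : Real.cos (0.5 * (4 * π)) = 1 := by
      rw [show (0.5 : ℝ) * (4 * π) = 2 * π by ring, cos_two_pi]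
    rw [integral_sq_Efield_of_integral_eq_one_add_cos (by norm_num) hkL hρ (by positivity),
      div_pow, mul_pow, ← Real.exp_nat_mul]
    ring_nf
end
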